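/- arXiv:2211.14525 — 3 statements merged into one kernel-verified Lean document; each statement's English description precedes it below -/
import Mathlib

section
/- Let X be a Hilbert space and f₀, f₁ : X → (-∞,+∞] be proper lower semicontinuous functions that are ρ₀- and ρ₁-weakly convex respectively (ρ₀, ρ₁ ≥ 0). Assume dom f₀ ∩ dom f₁ contains a point at which f₀ + (ρ₀/2)‖·‖² or f₁ + (ρ₁/2)‖·‖² is continuous. Then for any s ∈ dom (f₀+f₁)*_{ρ₀+ρ₁}, there exist p₀, p₁ ∈ X with s = p₀ + p₁ and (f₀+f₁)*_{ρ₀+ρ₁}(s) = (f₀)*_{ρ₀}(p₀) + (f₁)*_{ρ₁}(p₁). -/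
open scoped InnerProductSpace
open Set

noncomputable section

/-- A function into `(-∞,+∞]` is proper: never `⊥` and finite somewhere. -/
def EProper {X : Type*} (f : X → EReal) : Prop :=
  (∀ x, f x ≠ ⊥) ∧ ∃ x, f x ≠ ⊤

/-- Effective domain of an extended-real-valued function. -/
def edom {X : Type*} (f : X → EReal) : Set X := {x | f x ≠ ⊤}

/-- Convexity for extended-real-valued functions. -/
def EConvexOn {X : Type*} [AddCommGroup X] [Module ℝ X] (g : X → EReal) : Prop :=
  ∀ x y : X, ∀ l : ℝ, 0 ≤ l → l ≤ 1 →
    g (l • x + (1 - l) • y) ≤ (l : EReal) * g x + ((1 - l : ℝ) : EReal) * g y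

/-- `f` is `ρ`-weakly convex if `f + (ρ/2)‖·‖²` is convex. -/
def WeaklyConvex {X : Type*} [NormedAddCommGroup X] [InnerProductSpace ℝ X]
    (ρ : ℝ) (f : X → EReal) : Prop :=
  EConvexOn (fun x => f x + ((ρ / 2 * ‖x‖ ^ 2 : ℝ) : EReal))

/-- Global proximal ε-subdifferential `∂ᵋ_{(2,C)} f (x₀)`. -/
def proxSubdiff {X : Type*} [NormedAddCommGroup X] [InnerProductSpace ℝ X]
    (C ε : ℝ) (f : X → EReal) (x₀ : X) : Set X :=
  {v | ∀ x : X, f x₀ + ((⟪v, x - x₀⟫_ℝ - C * ‖x - x₀‖ ^ 2 - ε : ℝ) : EReal) ≤ f x}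

/-- The `ρ`-conjugate `(f)*_ρ(u) = sup_y { -(ρ/2)‖y‖² + ⟨u,y⟩ - f(y) }`. -/
def rhoConj {X : Type*} [NormedAddCommGroup X] [InnerProductSpace ℝ X]
    (ρ : ℝ) (f : X → EReal) (u : X) : EReal :=
  ⨆ y : X, (((-(ρ / 2) * ‖y‖ ^ 2 + ⟪u, y⟫_ℝ : ℝ) : EReal) - f y)

/-- `xε` is an ε-proximal point of `g` at `y`. -/
def IsEpsProx {X : Type*} [NormedAddCommGroup X] [InnerProductSpace ℝ X]
    (g : X → EReal) (ε : ℝ) (y xε : X) : Prop :=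
  ∀ x : X, g xε + ((1 / 2 * ‖xε - y‖ ^ 2 : ℝ) : EReal) ≤
    g x + ((1 / 2 * ‖x - y‖ ^ 2 : ℝ) : EReal) + (ε : EReal)

/-!
The `ρ`-conjugate of `f` is the Fenchel conjugate of the convex function `f + (ρ/2)‖·‖²`, and the
quadratic terms add up, so with `Fᵢ = fᵢ + (ρᵢ/2)‖·‖²` the claim is the exact infimal-convolution
formula `(F₀ + F₁)* s = min_{p₀ + p₁ = s} F₀* p₀ + F₁* p₁`. The inequality `≤` holds for every
splitting. For `≥`, put `α = (F₀ + F₁)* s`, so that `F₀ - ⟪s, ·⟫ ≥ -α - F₁`. Separating the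
epigraph of the left side, which has interior because `F₀` is continuous at a point where both
sides are finite, from the hypograph of the right side puts a continuous affine function
`⟪v, ·⟫ + β` between them (Hahn–Banach sandwich theorem). Then `p₀ = s + v`, `p₁ = -v` satisfy
`F₀* p₀ ≤ -β` and `F₁* p₁ ≤ α + β`.
-/

open Filter Topology

theorem EReal.exists_eq_coe {x : EReal} (htop : x ≠ ⊤) (hbot : x ≠ ⊥) : ∃ r : ℝ, x = r :=
  ⟨x.toReal, (EReal.coe_toReal htop hbot).symm⟩

theorem mem_interior_epigraph_of_continuousAt {E : Type*} [TopologicalSpace E] {s : Set E}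
    {f : E → ℝ} {x₀ : E} (hs : s ∈ 𝓝 x₀) (hf : ContinuousAt f x₀) {r : ℝ} (hr : f x₀ < r) :
    (x₀, r) ∈ interior {p : E × ℝ | p.1 ∈ s ∧ f p.1 ≤ p.2} := by
  rw [mem_interior_iff_mem_nhds]
  have hlt : ∀ᶠ p : E × ℝ in 𝓝 (x₀, r), f p.1 < p.2 :=
    (hf.comp continuousAt_fst).eventually_lt continuousAt_snd hr
  filter_upwards [continuousAt_fst.preimage_mem_nhds hs, hlt] with p hps hp
  exact ⟨hps, hp.le⟩

theorem lt_of_mem_interior_epigraph {E : Type*} [TopologicalSpace E] {s : Set E} {f : E → ℝ}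
    {p : E × ℝ} (hp : p ∈ interior {p : E × ℝ | p.1 ∈ s ∧ f p.1 ≤ p.2}) : f p.1 < p.2 := by
  have hnear : ∀ᶠ ε in 𝓝 (0 : ℝ), (p.1, p.2 - ε) ∈ {p : E × ℝ | p.1 ∈ s ∧ f p.1 ≤ p.2} := by
    refine ContinuousAt.preimage_mem_nhds ?_ (by simpa using mem_interior_iff_mem_nhds.1 hp)
    fun_prop
  obtain ⟨ε, ⟨-, hε⟩, hε₀⟩ := ((hnear.filter_mono nhdsWithin_le_nhds).and
    (self_mem_nhdsWithin (s := Set.Ioi 0))).exists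
  linarith

section Sandwich

variable {E : Type*} [TopologicalSpace E] [AddCommGroup E] [Module ℝ E]
  [IsTopologicalAddGroup E] [ContinuousSMul ℝ E] {s t : Set E} {f g : E → ℝ} {x₀ : E}

theorem ConvexOn.exists_affine_between (hf : ConvexOn ℝ s f) (hg : ConcaveOn ℝ t g)
    (hgf : ∀ x ∈ s ∩ t, g x ≤ f x) (hx₀ : x₀ ∈ t) (hs : s ∈ 𝓝 x₀) (hfc : ContinuousAt f x₀) :
    ∃ (φ : StrongDual ℝ E) (β : ℝ), (∀ x ∈ s, φ x + β ≤ f x) ∧ ∀ x ∈ t, g x ≤ φ x + β := by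
  set epi := {p : E × ℝ | p.1 ∈ s ∧ f p.1 ≤ p.2}
  have hint : (x₀, f x₀ + 1) ∈ interior epi :=
    mem_interior_epigraph_of_continuousAt hs hfc (lt_add_one _)
  have hdisj : Disjoint (interior epi) {p : E × ℝ | p.1 ∈ t ∧ p.2 ≤ g p.1} :=
    Set.disjoint_left.2 fun p hp ⟨hpt, hpg⟩ => by
      linarith [lt_of_mem_interior_epigraph hp, hgf p.1 ⟨(interior_subset hp).1, hpt⟩]
  obtain ⟨ℓ, u, hlt, hle⟩ :=
    geometric_hahn_banach_open hf.convex_epigraph.interior isOpen_interior hg.convex_hypograph hdisj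
  have hepi : ∀ p ∈ epi, ℓ p ≤ u := fun p hp =>
    closure_minimal (fun q hq => (hlt q hq).le) (isClosed_Iic.preimage ℓ.continuous) <| by
      simpa [hf.convex_epigraph.closure_interior_eq_closure_of_nonempty_interior ⟨_, hint⟩]
        using subset_closure hp
  set c := ℓ (0, 1)
  have hℓ : ∀ x r, ℓ (x, r) = ℓ (x, 0) + r * c := fun x r => by
    rw [← smul_eq_mul, ← map_smul, ← map_add, Prod.smul_mk, smul_zero, smul_eq_mul, mul_one,
      Prod.mk_add_mk, add_zero, zero_add]
  -- the separating hyperplane is not vertical, so it is the graph of the affine map sought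
  have hc : c < 0 := by
    have h₁ := hlt _ hint
    have h₂ := hle (x₀, g x₀) ⟨hx₀, le_rfl⟩
    rw [hℓ] at h₁ h₂
    nlinarith [hgf x₀ ⟨mem_of_mem_nhds hs, hx₀⟩]
  have hφ : ∀ x, (-c⁻¹ • ℓ.comp (ContinuousLinearMap.inl ℝ E ℝ)) x + u / c = (u - ℓ (x, 0)) / c :=
    fun x => by
      simp only [smul_apply, ContinuousLinearMap.comp_apply,
        ContinuousLinearMap.inl_apply, smul_eq_mul]
      ring
  refine ⟨-c⁻¹ • ℓ.comp (ContinuousLinearMap.inl ℝ E ℝ), u / c, fun x hx => ?_, fun x hx => ?_⟩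
  · have := hepi (x, f x) ⟨hx, le_rfl⟩
    rw [hℓ] at this
    rw [hφ, div_le_iff_of_neg hc]
    linarith
  · have := hle (x, g x) ⟨hx, le_rfl⟩
    rw [hℓ] at this
    rw [hφ, le_div_iff_of_neg hc]
    linarith

end Sandwich

theorem EConvexOn.convexOn_toReal {E : Type*} [AddCommGroup E] [Module ℝ E] {F : E → EReal}
    (hF : EConvexOn F) (hbot : ∀ x, F x ≠ ⊥) : ConvexOn ℝ (edom F) fun x => (F x).toReal := by
  have key : ∀ x ∈ edom F, ∀ y ∈ edom F, ∀ a b : ℝ, 0 ≤ a → 0 ≤ b → a + b = 1 →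
      F (a • x + b • y) ≤ ((a * (F x).toReal + b * (F y).toReal : ℝ) : EReal) := by
    intro x hx y hy a b ha hb hab
    obtain rfl : b = 1 - a := by linarith
    simpa only [EReal.coe_add, EReal.coe_mul, EReal.coe_toReal hx (hbot x),
      EReal.coe_toReal hy (hbot y)] using hF x y a ha (by linarith)
  refine ⟨fun x hx y hy a b ha hb hab => ?_, fun x hx y hy a b ha hb hab => ?_⟩
  · exact ne_top_of_le_ne_top (EReal.coe_ne_top _) (key x hx y hy a b ha hb hab)
  · simpa only [EReal.toReal_coe, smul_eq_mul] using
      EReal.toReal_le_toReal (key x hx y hy a b ha hb hab) (hbot _) (EReal.coe_ne_top _)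

section FenchelConjugate

variable {X : Type*} [NormedAddCommGroup X] [InnerProductSpace ℝ X] {F F₀ F₁ : X → EReal}

def fenchelConj (F : X → EReal) (p : X) : EReal :=
  ⨆ y : X, (((⟪p, y⟫_ℝ : ℝ) : EReal) - F y)

theorem coe_inner_sub_le_fenchelConj {p y : X} {r : ℝ} (hy : F y = r) :
    ((⟪p, y⟫_ℝ - r : ℝ) : EReal) ≤ fenchelConj F p :=
  le_iSup_of_le y (by rw [hy, EReal.coe_sub])

theorem fenchelConj_le_coe (hbot : ∀ x, F x ≠ ⊥) {p : X} {c : ℝ}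
    (h : ∀ y ∈ edom F, ⟪p, y⟫_ℝ - (F y).toReal ≤ c) : fenchelConj F p ≤ c := by
  refine iSup_le fun y => ?_
  by_cases hy : F y = ⊤
  · simp [hy]
  rw [← EReal.coe_toReal hy (hbot y), ← EReal.coe_sub]
  exact_mod_cast h y hy

theorem fenchelConj_add_le (hbot₀ : ∀ x, F₀ x ≠ ⊥) (hbot₁ : ∀ x, F₁ x ≠ ⊥) (p₀ p₁ : X) :
    fenchelConj (F₀ + F₁) (p₀ + p₁) ≤ fenchelConj F₀ p₀ + fenchelConj F₁ p₁ := by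
  refine iSup_le fun y => ?_
  by_cases hy₀ : F₀ y = ⊤
  · simp [hy₀, EReal.top_add_of_ne_bot (hbot₁ y)]
  by_cases hy₁ : F₁ y = ⊤
  · simp [hy₁, EReal.add_top_of_ne_bot (hbot₀ y)]
  obtain ⟨r₀, hr₀⟩ := EReal.exists_eq_coe hy₀ (hbot₀ y)
  obtain ⟨r₁, hr₁⟩ := EReal.exists_eq_coe hy₁ (hbot₁ y)
  calc ((⟪p₀ + p₁, y⟫_ℝ : ℝ) : EReal) - (F₀ + F₁) y
      = ((⟪p₀, y⟫_ℝ - r₀ : ℝ) : EReal) + ((⟪p₁, y⟫_ℝ - r₁ : ℝ) : EReal) := by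
        rw [Pi.add_apply, hr₀, hr₁, inner_add_left]
        norm_cast
        ring
    _ ≤ fenchelConj F₀ p₀ + fenchelConj F₁ p₁ :=
        add_le_add (coe_inner_sub_le_fenchelConj hr₀) (coe_inner_sub_le_fenchelConj hr₁)

theorem exists_fenchelConj_add_le [CompleteSpace X] (hF₀ : EConvexOn F₀) (hF₁ : EConvexOn F₁)
    (hbot₀ : ∀ x, F₀ x ≠ ⊥) (hbot₁ : ∀ x, F₁ x ≠ ⊥) {x₀ : X} (hx₀ : x₀ ∈ edom F₀ ∩ edom F₁)
    (hcont : ContinuousAt F₀ x₀) {s : X} {α : ℝ} (hα : fenchelConj (F₀ + F₁) s ≤ α) :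
    ∃ p₀ p₁ : X, s = p₀ + p₁ ∧ fenchelConj F₀ p₀ + fenchelConj F₁ p₁ ≤ α := by
  have hf : ConvexOn ℝ (edom F₀) fun x => (F₀ x).toReal - ⟪s, x⟫_ℝ :=
    (hF₀.convexOn_toReal hbot₀).sub ((innerₛₗ ℝ s).concaveOn (hF₀.convexOn_toReal hbot₀).1)
  have hg : ConcaveOn ℝ (edom F₁) fun x => -(F₁ x).toReal - α :=
    (hF₁.convexOn_toReal hbot₁).neg.sub (convexOn_const α (hF₁.convexOn_toReal hbot₁).1)
  have hgf : ∀ x ∈ edom F₀ ∩ edom F₁, -(F₁ x).toReal - α ≤ (F₀ x).toReal - ⟪s, x⟫_ℝ := by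
    rintro x ⟨hx₀, hx₁⟩
    have hsum : (F₀ + F₁) x = ((F₀ x).toReal + (F₁ x).toReal : ℝ) := by
      rw [Pi.add_apply, EReal.coe_add, EReal.coe_toReal hx₀ (hbot₀ x),
        EReal.coe_toReal hx₁ (hbot₁ x)]
    have := EReal.coe_le_coe_iff.1 ((coe_inner_sub_le_fenchelConj hsum).trans hα)
    linarith
  have hdom : edom F₀ ∈ 𝓝 x₀ := hcont.preimage_mem_nhds (isOpen_compl_singleton.mem_nhds hx₀.1)
  have hfc : ContinuousAt (fun x => (F₀ x).toReal - ⟪s, x⟫_ℝ) x₀ :=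
    ((EReal.tendsto_toReal hx₀.1 (hbot₀ x₀)).comp hcont).sub
      (continuous_const.inner continuous_id).continuousAt
  obtain ⟨φ, β, hφ₀, hφ₁⟩ := hf.exists_affine_between hg hgf hx₀.2 hdom hfc
  set v := (InnerProductSpace.toDual ℝ X).symm φ
  have hv : ∀ y, ⟪v, y⟫_ℝ = φ y := fun y => InnerProductSpace.toDual_symm_apply
  refine ⟨s + v, -v, by abel, ?_⟩
  calc fenchelConj F₀ (s + v) + fenchelConj F₁ (-v)
      ≤ ((-β : ℝ) : EReal) + ((α + β : ℝ) : EReal) := by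
        gcongr
        · refine fenchelConj_le_coe hbot₀ fun y hy => ?_
          linarith [hφ₀ y hy, hv y, inner_add_left (𝕜 := ℝ) s v y]
        · refine fenchelConj_le_coe hbot₁ fun y hy => ?_
          linarith [hφ₁ y hy, hv y, inner_neg_left (𝕜 := ℝ) v y]
    _ = α := by norm_cast; ring

theorem exists_fenchelConj_add_eq [CompleteSpace X] (hF₀ : EConvexOn F₀) (hF₁ : EConvexOn F₁)
    (hbot₀ : ∀ x, F₀ x ≠ ⊥) (hbot₁ : ∀ x, F₁ x ≠ ⊥) {x₀ : X} (hx₀ : x₀ ∈ edom F₀ ∩ edom F₁)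
    (hcont : ContinuousAt F₀ x₀) {s : X} (hs : fenchelConj (F₀ + F₁) s ≠ ⊤) :
    ∃ p₀ p₁ : X, s = p₀ + p₁ ∧
      fenchelConj (F₀ + F₁) s = fenchelConj F₀ p₀ + fenchelConj F₁ p₁ := by
  obtain ⟨r₀, hr₀⟩ := EReal.exists_eq_coe hx₀.1 (hbot₀ x₀)
  obtain ⟨r₁, hr₁⟩ := EReal.exists_eq_coe hx₀.2 (hbot₁ x₀)
  have hsum : (F₀ + F₁) x₀ = ((r₀ + r₁ : ℝ) : EReal) := by
    rw [Pi.add_apply, hr₀, hr₁, EReal.coe_add]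
  have hbot : fenchelConj (F₀ + F₁) s ≠ ⊥ :=
    ne_bot_of_le_ne_bot (EReal.coe_ne_bot _) (coe_inner_sub_le_fenchelConj hsum)
  obtain ⟨α, hα⟩ := EReal.exists_eq_coe hs hbot
  obtain ⟨p₀, p₁, rfl, hle⟩ :=
    exists_fenchelConj_add_le hF₀ hF₁ hbot₀ hbot₁ hx₀ hcont hα.le
  exact ⟨p₀, p₁, rfl, le_antisymm (fenchelConj_add_le hbot₀ hbot₁ p₀ p₁) (hα ▸ hle)⟩

theorem rhoConj_eq_fenchelConj (ρ : ℝ) (f : X → EReal) (p : X) :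
    rhoConj ρ f p = fenchelConj (fun x => f x + ((ρ / 2 * ‖x‖ ^ 2 : ℝ) : EReal)) p := by
  refine iSup_congr fun y => ?_
  dsimp only
  generalize f y = a
  induction a using EReal.rec with
  | bot => rw [EReal.bot_add, EReal.coe_sub_bot, EReal.coe_sub_bot]
  | top => rw [EReal.top_add_coe, EReal.sub_top, EReal.sub_top]
  | coe r => norm_cast; ring

end FenchelConjugate

variable {X : Type*} [NormedAddCommGroup X] [InnerProductSpace ℝ X] [CompleteSpace X]
theorem rhoConj_sum_general (f₀ f₁ : X → EReal) (ρ₀ ρ₁ : ℝ)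
    (hp₀ : EProper f₀) (hp₁ : EProper f₁)
    (hw₀ : WeaklyConvex ρ₀ f₀) (hw₁ : WeaklyConvex ρ₁ f₁)
    (hcont : ∃ x ∈ edom f₀ ∩ edom f₁,
      ContinuousAt (fun z => f₀ z + ((ρ₀ / 2 * ‖z‖ ^ 2 : ℝ) : EReal)) x ∨
      ContinuousAt (fun z => f₁ z + ((ρ₁ / 2 * ‖z‖ ^ 2 : ℝ) : EReal)) x)
    (s : X) (hs : rhoConj (ρ₀ + ρ₁) (fun x => f₀ x + f₁ x) s ≠ ⊤) :
    ∃ p₀ p₁ : X, s = p₀ + p₁ ∧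
      rhoConj (ρ₀ + ρ₁) (fun x => f₀ x + f₁ x) s =
        rhoConj ρ₀ f₀ p₀ + rhoConj ρ₁ f₁ p₁ := by
  obtain ⟨x₀, ⟨hx₀, hx₁⟩, hcont⟩ := hcont
  set F₀ := fun x => f₀ x + ((ρ₀ / 2 * ‖x‖ ^ 2 : ℝ) : EReal)
  set F₁ := fun x => f₁ x + ((ρ₁ / 2 * ‖x‖ ^ 2 : ℝ) : EReal)
  have hsplit : (fun x => f₀ x + f₁ x + (((ρ₀ + ρ₁) / 2 * ‖x‖ ^ 2 : ℝ) : EReal)) = F₀ + F₁ := by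
    ext x
    rw [Pi.add_apply, add_div, add_mul, EReal.coe_add, add_add_add_comm]
  simp only [rhoConj_eq_fenchelConj, hsplit] at hs ⊢
  have hbot₀ : ∀ x, F₀ x ≠ ⊥ := fun x => EReal.add_ne_bot_iff.2 ⟨hp₀.1 x, EReal.coe_ne_bot _⟩
  have hbot₁ : ∀ x, F₁ x ≠ ⊥ := fun x => EReal.add_ne_bot_iff.2 ⟨hp₁.1 x, EReal.coe_ne_bot _⟩
  have hdom : x₀ ∈ edom F₀ ∩ edom F₁ :=
    ⟨EReal.add_ne_top hx₀ (EReal.coe_ne_top _), EReal.add_ne_top hx₁ (EReal.coe_ne_top _)⟩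
  rcases hcont with hcont₀ | hcont₁
  · exact exists_fenchelConj_add_eq hw₀ hw₁ hbot₀ hbot₁ hdom hcont₀ hs
  · obtain ⟨p₁, p₀, hsum, h⟩ :=
      exists_fenchelConj_add_eq hw₁ hw₀ hbot₁ hbot₀ hdom.symm hcont₁ (add_comm F₀ F₁ ▸ hs)
    exact ⟨p₀, p₁, hsum.trans (add_comm p₁ p₀), by rw [add_comm F₀, h, add_comm]⟩

theorem rhoConj_sum (f₀ f₁ : X → EReal) (ρ₀ ρ₁ : ℝ) (hρ₀ : 0 ≤ ρ₀) (hρ₁ : 0 ≤ ρ₁)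
    (hp₀ : EProper f₀) (hp₁ : EProper f₁)
    (hl₀ : LowerSemicontinuous f₀) (hl₁ : LowerSemicontinuous f₁)
    (hw₀ : WeaklyConvex ρ₀ f₀) (hw₁ : WeaklyConvex ρ₁ f₁)
    (hcont : ∃ x ∈ edom f₀ ∩ edom f₁,
      ContinuousAt (fun z => f₀ z + ((ρ₀ / 2 * ‖z‖ ^ 2 : ℝ) : EReal)) x ∨
      ContinuousAt (fun z => f₁ z + ((ρ₁ / 2 * ‖z‖ ^ 2 : ℝ) : EReal)) x)
    (s : X) (hs : rhoConj (ρ₀ + ρ₁) (fun x => f₀ x + f₁ x) s ≠ ⊤) :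
    ∃ p₀ p₁ : X, s = p₀ + p₁ ∧
      rhoConj (ρ₀ + ρ₁) (fun x => f₀ x + f₁ x) s =
        rhoConj ρ₀ f₀ p₀ + rhoConj ρ₁ f₁ p₁ :=
  rhoConj_sum_general f₀ f₁ ρ₀ ρ₁ hp₀ hp₁ hw₀ hw₁ hcont s hs
end
end

section
/- Let X be a Hilbert space, y ∈ X, α > 0, and ε ≥ 0. For the quadratic function f₀(x) = (1/(2α))‖x - y‖², the convex ε-subdifferential at any x ∈ X is exactly ∂ᵋ₀ f₀(x) = { (x - y)/α + e/α : e ∈ X, ‖e‖²/(2α) ≤ ε }. -/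
open scoped InnerProductSpace
open Set

noncomputable section

/-! Write `α • v = x - y + e`. Completing the square, the gap
`‖z - y‖² / (2α) - ‖x - y‖² / (2α) - ⟪v, z - x⟫` equals `(‖z - x - e‖² - ‖e‖²) / (2α)`,
whose infimum over `z` is `-‖e‖² / (2α)`, attained at `z = x + e`. So `v` is an
`ε`-subgradient exactly when `‖e‖² / (2α) ≤ ε`. -/

section Quadratic

variable {E : Type*} [NormedAddCommGroup E] [InnerProductSpace ℝ E]

theorem mem_proxSubdiff_zero_coe_iff {ε : ℝ} {g : E → ℝ} {x v : E} :
    v ∈ proxSubdiff 0 ε (fun z => (g z : EReal)) x ↔ ∀ z, -ε ≤ g z - g x - ⟪v, z - x⟫_ℝ := by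
  simp only [proxSubdiff, mem_ofPred_eq, zero_mul, sub_zero, ← EReal.coe_add,
    EReal.coe_le_coe_iff]
  exact forall_congr' fun z => by constructor <;> intro h <;> linarith

theorem quadratic_sub_affine_eq {α : ℝ} (hα : α ≠ 0) {x y z v e : E}
    (hv : α • v = x - y + e) :
    1 / (2 * α) * ‖z - y‖ ^ 2 - 1 / (2 * α) * ‖x - y‖ ^ 2 - ⟪v, z - x⟫_ℝ =
      (‖z - x - e‖ ^ 2 - ‖e‖ ^ 2) / (2 * α) := by
  have hinner : ⟪v, z - x⟫_ℝ = α⁻¹ * ⟪x - y + e, z - x⟫_ℝ := by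
    rw [← hv, real_inner_smul_left, inv_mul_cancel_left₀ hα]
  have hzy : z - y = (z - x) + (x - y) := by abel
  rw [hinner, hzy, norm_add_sq_real, norm_sub_sq_real (z - x) e, inner_add_left,
    real_inner_comm (x - y), real_inner_comm e]
  field_simp
  ring

theorem mem_proxSubdiff_quadratic_iff {α ε : ℝ} (hα : 0 < α) {x y v e : E}
    (hv : α • v = x - y + e) :
    v ∈ proxSubdiff 0 ε (fun z => ((1 / (2 * α) * ‖z - y‖ ^ 2 : ℝ) : EReal)) x ↔
      ‖e‖ ^ 2 / (2 * α) ≤ ε := by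
  simp only [mem_proxSubdiff_zero_coe_iff, quadratic_sub_affine_eq hα.ne' hv]
  constructor
  · intro h
    simpa [add_sub_cancel_left, neg_div] using h (x + e)
  · intro h z
    rw [sub_div, neg_le_sub_iff_le_add]
    have : 0 ≤ ‖z - x - e‖ ^ 2 / (2 * α) := by positivity
    linarith

end Quadratic

variable {X : Type*} [NormedAddCommGroup X] [InnerProductSpace ℝ X] [CompleteSpace X]
theorem epsSubdiff_quadratic_general (y : X) (α ε : ℝ) (hα : 0 < α) (x : X) :
    proxSubdiff 0 ε (fun z => ((1 / (2 * α) * ‖z - y‖ ^ 2 : ℝ) : EReal)) x =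
      {v : X | ∃ e : X, ‖e‖ ^ 2 / (2 * α) ≤ ε ∧ v = α⁻¹ • (x - y) + α⁻¹ • e} := by
  ext v
  constructor
  · intro hv
    refine ⟨α • v - (x - y), (mem_proxSubdiff_quadratic_iff hα (by abel)).1 hv, ?_⟩
    rw [← smul_add, add_sub_cancel, inv_smul_smul₀ hα.ne']
  · rintro ⟨e, he, rfl⟩
    exact (mem_proxSubdiff_quadratic_iff hα (by rw [← smul_add, smul_inv_smul₀ hα.ne'])).2 he

theorem epsSubdiff_quadratic (y : X) (α ε : ℝ) (hα : 0 < α) (hε : 0 ≤ ε) (x : X) :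
    proxSubdiff 0 ε (fun z => ((1 / (2 * α) * ‖z - y‖ ^ 2 : ℝ) : EReal)) x =
      {v : X | ∃ e : X, ‖e‖ ^ 2 / (2 * α) ≤ ε ∧ v = α⁻¹ • (x - y) + α⁻¹ • e} :=
  epsSubdiff_quadratic_general y α ε hα x
end
end

section
/- Let X be a Hilbert space, f : X → (-∞,+∞] proper and ρ-weakly convex, ε ≥ 0, α > 0, y, x_ε ∈ X. Suppose there exist ε₀, ε₁ ≥ 0 with ε₀ + ε₁ ≤ ε and e ∈ X with ‖e‖²/(2α) ≤ ε₀ such that (y - x_ε - e)/α ∈ ∂^{ε₁}_{(2,ρ/2)} f(x_ε). Then (y - x_ε)/α ∈ ∂ᵋ_{(2, ρ/2 + 1/(2α))} f(x_ε). -/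
/-!
Perturbing a proximal subgradient by `α⁻¹ • e` costs, by Cauchy–Schwarz and Young,
`⟪α⁻¹ • e, x - xε⟫ ≤ ‖e‖² / (2α) + ‖x - xε‖² / (2α)`: the first term is absorbed into the
error `ε₀` and the second into the quadratic modulus.
-/

open scoped InnerProductSpace
open Set

noncomputable section

section

variable {X : Type*} [NormedAddCommGroup X] [InnerProductSpace ℝ X]

theorem proxSubdiff_mono_of_forall_le {f : X → EReal} {x₀ v w : X} {C C' ε ε' : ℝ}
    (hle : ∀ d : X, ⟪w, d⟫_ℝ - C' * ‖d‖ ^ 2 - ε' ≤ ⟪v, d⟫_ℝ - C * ‖d‖ ^ 2 - ε)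
    (hv : v ∈ proxSubdiff C ε f x₀) : w ∈ proxSubdiff C' ε' f x₀ := fun x =>
  (add_le_add_right (EReal.coe_le_coe_iff.2 (hle (x - x₀))) _).trans (hv x)

theorem proxSubdiff_mono_eps {f : X → EReal} {x₀ : X} {C ε ε' : ℝ} (hε : ε ≤ ε') :
    proxSubdiff C ε f x₀ ⊆ proxSubdiff C ε' f x₀ := fun _ =>
  proxSubdiff_mono_of_forall_le fun _ => by linarith

theorem real_inner_inv_smul_le {α : ℝ} (hα : 0 ≤ α) (e d : X) :
    ⟪α⁻¹ • e, d⟫_ℝ ≤ ‖e‖ ^ 2 / (2 * α) + 1 / (2 * α) * ‖d‖ ^ 2 := by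
  have young : 2 * ⟪e, d⟫_ℝ ≤ ‖e‖ ^ 2 + ‖d‖ ^ 2 := by
    linarith [real_inner_le_norm e d, two_mul_le_add_sq ‖e‖ ‖d‖]
  calc ⟪α⁻¹ • e, d⟫_ℝ = (2 * α)⁻¹ * (2 * ⟪e, d⟫_ℝ) := by
        rw [real_inner_smul_left]; ring
    _ ≤ (2 * α)⁻¹ * (‖e‖ ^ 2 + ‖d‖ ^ 2) := by gcongr
    _ = ‖e‖ ^ 2 / (2 * α) + 1 / (2 * α) * ‖d‖ ^ 2 := by ring

theorem add_inv_smul_mem_proxSubdiff {f : X → EReal} {x₀ v : X} {C ε α : ℝ} (hα : 0 ≤ α)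
    (e : X) (hv : v ∈ proxSubdiff C ε f x₀) :
    v + α⁻¹ • e ∈ proxSubdiff (C + 1 / (2 * α)) (‖e‖ ^ 2 / (2 * α) + ε) f x₀ :=
  proxSubdiff_mono_of_forall_le (fun d => by
    have hcross := real_inner_inv_smul_le hα e d
    rw [inner_add_left]
    linarith) hv

end

variable {X : Type*} [NormedAddCommGroup X] [InnerProductSpace ℝ X] [CompleteSpace X]
theorem type1_imp_type2_general (f : X → EReal) (ρ ε α : ℝ) (hα : 0 < α)
    (y xε : X)
    (h : ∃ ε₀ ε₁ : ℝ, 0 ≤ ε₀ ∧ 0 ≤ ε₁ ∧ ε₀ + ε₁ ≤ ε ∧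
      ∃ e : X, ‖e‖ ^ 2 / (2 * α) ≤ ε₀ ∧
        α⁻¹ • (y - xε - e) ∈ proxSubdiff (ρ / 2) ε₁ f xε) :
    α⁻¹ • (y - xε) ∈ proxSubdiff (ρ / 2 + 1 / (2 * α)) ε f xε := by
  obtain ⟨ε₀, ε₁, -, -, hsum, e, he, hv⟩ := h
  have hperturbed := add_inv_smul_mem_proxSubdiff hα.le e hv
  rw [← smul_add, sub_add_cancel] at hperturbed
  exact proxSubdiff_mono_eps (by linarith) hperturbed

theorem type1_imp_type2 (f : X → EReal) (ρ ε α : ℝ) (hρ : 0 ≤ ρ) (hε : 0 ≤ ε) (hα : 0 < α)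
    (hp : EProper f) (hwc : WeaklyConvex ρ f) (y xε : X)
    (h : ∃ ε₀ ε₁ : ℝ, 0 ≤ ε₀ ∧ 0 ≤ ε₁ ∧ ε₀ + ε₁ ≤ ε ∧
      ∃ e : X, ‖e‖ ^ 2 / (2 * α) ≤ ε₀ ∧
        α⁻¹ • (y - xε - e) ∈ proxSubdiff (ρ / 2) ε₁ f xε) :
    α⁻¹ • (y - xε) ∈ proxSubdiff (ρ / 2 + 1 / (2 * α)) ε f xε :=
  type1_imp_type2_general f ρ ε α hα y xε h
end
end
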